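/- arXiv:1509.01977 — 6 statements merged into one kernel-verified Lean document; each statement's English description precedes it below -/
import Mathlib

section
/- For all x in (0, π/2), the function f(x) = (1 - e^{x·cot(x) - 1})/(1 - cos(x)) is strictly decreasing, and its range is ((e-1)/e, 2/3). -/
/-!
Write `y = 1 - x cot x = (sin x - x cos x) / sin x`, so that the function is
`(1 - e^{-y}) / (1 - cos x)`. Its derivative is negative on `(0, π/2)` iff
`(x - sin x cos x) (1 - cos x) < (e^y - 1) sin³ x`. We bound `e^y - 1` below by `y + y²/2 + y³/6`
and `sin x`, `sin x - x cos x`, `x - sin x cos x = x - sin (2x) / 2`, `1 - cos x` by Taylor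
polynomials, obtained for all `x ≥ 0` by repeatedly integrating derivative inequalities. The
difference of the two sides is then at least `x⁷ R(x²)` for an explicit polynomial `R` that is
positive on `[0, 64/25]`. The difference itself is only `x⁷/180 + O(x⁹)`, which is why the Taylor
polynomials have to be this long.

Knowing monotonicity, continuity on `(0, π/2]` and the value `1 - 1/e` at `π/2`, the range
follows from the limit `2/3` at `0⁺`, which comes from squeezing between rational functions
given by low-order Taylor bounds.
-/

open Real Set Filter Topology
open scoped Nat

theorem le_of_hasDerivAt_le {f g f' g' : ℝ → ℝ} {a x : ℝ}
    (hf : ∀ t, HasDerivAt f (f' t) t) (hg : ∀ t, HasDerivAt g (g' t) t)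
    (ha : f a ≤ g a) (hle : ∀ t, a ≤ t → f' t ≤ g' t) (hx : a ≤ x) : f x ≤ g x := by
  have hmono : MonotoneOn (fun t => g t - f t) (Ici a) :=
    monotoneOn_of_hasDerivWithinAt_nonneg (convex_Ici a)
      (fun t _ => ((hg t).sub (hf t)).continuousAt.continuousWithinAt)
      (fun t _ => ((hg t).sub (hf t)).hasDerivWithinAt)
      (fun t ht => sub_nonneg.2 (hle t (interior_subset ht)))
  have := hmono self_mem_Ici hx hx
  simp only at this
  linarith

theorem image_Ioo_eq_Ioo_of_strictAntiOn {α β : Type*} [ConditionallyCompleteLinearOrder α]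
    [TopologicalSpace α] [OrderTopology α] [DenselyOrdered α] [LinearOrder β]
    [TopologicalSpace β] [OrderClosedTopology β] {f : α → β} {a b : α} {L : β} (hab : a < b)
    (hf : ContinuousOn f (Ioc a b)) (hanti : StrictAntiOn f (Ioc a b))
    (hlim : Tendsto f (𝓝[>] a) (𝓝 L)) : f '' Ioo a b = Ioo (f b) L := by
  have : (𝓝[>] a).NeBot := nhdsGT_neBot_of_exists_gt ⟨b, hab⟩
  ext z
  constructor
  · rintro ⟨x, hx, rfl⟩
    refine ⟨hanti ⟨hx.1, hx.2.le⟩ ⟨hab, le_rfl⟩ hx.2, ?_⟩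
    obtain ⟨x', hax', hx'x⟩ := exists_between hx.1
    have hx'L : f x' ≤ L := by
      refine ge_of_tendsto hlim ?_
      filter_upwards [Ioo_mem_nhdsGT hax'] with t ht
      exact (hanti ⟨ht.1, ht.2.le.trans (hx'x.trans hx.2).le⟩
        ⟨hax', (hx'x.trans hx.2).le⟩ ht.2).le
    exact (hanti ⟨hax', (hx'x.trans hx.2).le⟩ ⟨hx.1, hx.2.le⟩ hx'x).trans_le hx'L
  · rintro ⟨hbz, hzL⟩
    obtain ⟨t, hzt, ht⟩ :=
      ((hlim.eventually (eventually_gt_nhds hzL)).and (Ioo_mem_nhdsGT hab)).exists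
    have := intermediate_value_Ioo' ht.2.le (hf.mono (Icc_subset_Ioc ht.1 le_rfl)) ⟨hbz, hzt⟩
    exact image_mono (Ioo_subset_Ioo_left ht.1.le) this

noncomputable def sinTaylor (n : ℕ) (x : ℝ) : ℝ :=
  ∑ k ∈ Finset.range n, (-1) ^ k * x ^ (2 * k + 1) / (2 * k + 1)!

noncomputable def cosTaylor (n : ℕ) (x : ℝ) : ℝ :=
  ∑ k ∈ Finset.range n, (-1) ^ k * x ^ (2 * k) / (2 * k)!

theorem hasDerivAt_sinTaylor (n : ℕ) (x : ℝ) :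
    HasDerivAt (sinTaylor n) (cosTaylor n x) x := by
  unfold sinTaylor cosTaylor
  refine HasDerivAt.fun_sum fun k _ => ?_
  refine (((hasDerivAt_pow (2 * k + 1) x).const_mul ((-1 : ℝ) ^ k)).div_const
    ((2 * k + 1)! : ℝ)).congr_deriv ?_
  rw [Nat.factorial_succ]
  push_cast
  field_simp

theorem hasDerivAt_cosTaylor (n : ℕ) (x : ℝ) :
    HasDerivAt (cosTaylor (n + 1)) (-sinTaylor n x) x := by
  have h : cosTaylor (n + 1) =
      fun y => ∑ k ∈ Finset.range n, (-1 : ℝ) ^ (k + 1) * y ^ (2 * k + 2) / (2 * k + 2)! + 1 := by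
    funext y
    simp [cosTaylor, Finset.sum_range_succ', mul_add]
  rw [h, sinTaylor, ← Finset.sum_neg_distrib]
  refine (HasDerivAt.fun_sum fun k _ => ?_).add_const 1
  refine (((hasDerivAt_pow (2 * k + 2) x).const_mul ((-1 : ℝ) ^ (k + 1))).div_const
    ((2 * k + 2)! : ℝ)).congr_deriv ?_
  rw [show 2 * k + 2 = (2 * k + 1) + 1 by ring, Nat.factorial_succ]
  push_cast
  field_simp
  ring

theorem sign_mul_taylor_sub_nonneg (n : ℕ) {x : ℝ} (hx : 0 ≤ x) :
    0 ≤ (-1) ^ n * (sinTaylor (n + 1) x - sin x) ∧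
      0 ≤ (-1) ^ n * (cosTaylor (n + 1) x - cos x) := by
  induction n generalizing x with
  | zero =>
    simp only [pow_zero, one_mul, sub_nonneg]
    simpa [sinTaylor, cosTaylor] using ⟨sin_le hx, cos_le_one x⟩
  | succ n ih =>
    have hcos : ∀ t, 0 ≤ t → 0 ≤ (-1) ^ (n + 1) * (cosTaylor (n + 2) t - cos t) := by
      intro t ht
      refine le_of_hasDerivAt_le (f := fun _ => 0) (f' := fun _ => 0)
        (g := fun t => (-1) ^ (n + 1) * (cosTaylor (n + 2) t - cos t))
        (fun t => hasDerivAt_const t 0)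
        (fun t => ((hasDerivAt_cosTaylor (n + 1) t).sub (hasDerivAt_cos t)).const_mul _)
        (by simp [cosTaylor, Finset.sum_range_succ']) (fun s hs => ?_) ht
      have := (ih hs).1
      simp only [pow_succ] at this ⊢
      linarith
    refine ⟨?_, hcos x hx⟩
    refine le_of_hasDerivAt_le (f := fun _ => 0) (f' := fun _ => 0)
      (g := fun t => (-1) ^ (n + 1) * (sinTaylor (n + 2) t - sin t))
      (fun t => hasDerivAt_const t 0)
      (fun t => ((hasDerivAt_sinTaylor (n + 2) t).sub (hasDerivAt_sin t)).const_mul _)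
      (by simp [sinTaylor]) hcos hx

theorem sinTaylor_le_sin (m : ℕ) {x : ℝ} (hx : 0 ≤ x) : sinTaylor (2 * m + 2) x ≤ sin x := by
  have := (sign_mul_taylor_sub_nonneg (2 * m + 1) hx).1
  rw [pow_succ, pow_mul] at this
  norm_num at this
  linarith

theorem cosTaylor_le_cos (m : ℕ) {x : ℝ} (hx : 0 ≤ x) : cosTaylor (2 * m + 2) x ≤ cos x := by
  have := (sign_mul_taylor_sub_nonneg (2 * m + 1) hx).2
  rw [pow_succ, pow_mul] at this
  norm_num at this
  linarith

theorem cos_le_cosTaylor (m : ℕ) {x : ℝ} (hx : 0 ≤ x) : cos x ≤ cosTaylor (2 * m + 1) x := by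
  have := (sign_mul_taylor_sub_nonneg (2 * m) hx).2
  rw [pow_mul] at this
  norm_num at this
  linarith

theorem sign_mul_taylor_sub_sin_sub_mul_cos_nonneg (n : ℕ) {x : ℝ} (hx : 0 ≤ x) :
    0 ≤ (-1) ^ n * (sinTaylor (n + 2) x - x * cosTaylor (n + 2) x - (sin x - x * cos x)) := by
  refine le_of_hasDerivAt_le (f := fun _ => 0) (f' := fun _ => 0)
    (g := fun t => (-1) ^ n * (sinTaylor (n + 2) t - t * cosTaylor (n + 2) t - (sin t - t * cos t)))
    (fun t => hasDerivAt_const t 0)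
    (fun t => (((hasDerivAt_sinTaylor (n + 2) t).sub ((hasDerivAt_id t).mul
      (hasDerivAt_cosTaylor (n + 1) t))).sub ((hasDerivAt_sin t).sub
      ((hasDerivAt_id t).mul (hasDerivAt_cos t)))).const_mul _)
    (by simp [sinTaylor]) (fun t ht => ?_) hx
  have := mul_nonneg ht (sign_mul_taylor_sub_nonneg n ht).1
  simp only [id]
  linarith

theorem sinTaylor_four (x : ℝ) : sinTaylor 4 x = x - x ^ 3 / 6 + x ^ 5 / 120 - x ^ 7 / 5040 := by
  simp [sinTaylor, Finset.sum_range_succ, Nat.factorial]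
  ring

theorem cosTaylor_four (x : ℝ) : cosTaylor 4 x = 1 - x ^ 2 / 2 + x ^ 4 / 24 - x ^ 6 / 720 := by
  simp [cosTaylor, Finset.sum_range_succ, Nat.factorial]
  ring

theorem sinTaylor_five_sub_mul_cosTaylor_five (x : ℝ) :
    sinTaylor 5 x - x * cosTaylor 5 x = x ^ 3 / 3 - x ^ 5 / 30 + x ^ 7 / 840 - x ^ 9 / 45360 := by
  simp [sinTaylor, cosTaylor, Finset.sum_range_succ, Nat.factorial]
  ring

theorem one_add_add_sq_add_cube_le_exp {y : ℝ} (hy : 0 ≤ y) :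
    1 + y + y ^ 2 / 2 + y ^ 3 / 6 ≤ exp y := by
  have := Real.sum_le_exp_of_nonneg hy 4
  norm_num [Finset.sum_range_succ, Nat.factorial] at this
  linarith

/-- `x ^ 7` times this polynomial in `y = x ^ 2` is the difference of the two sides of
`taylor_polynomial_key_lt`. -/
theorem remainder_poly_pos {y : ℝ} (h0 : 0 ≤ y) (h1 : y ≤ 64 / 25) :
    0 < 1/180 + y/11340 - 47*y^2/56700 + 41*y^3/302400 - 331*y^4/28576800
      + 11*y^5/16934400 - 79*y^6/2939328000 + 701*y^7/864162432000
      - y^8/57610828800 + y^9/4147979673600 - y^10/559977255936000 := by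
  nlinarith [sq_nonneg y, sq_nonneg (y - 1), sq_nonneg (y - 2), pow_le_pow_left₀ h0 h1 2,
    pow_le_pow_left₀ h0 h1 4, pow_le_pow_left₀ h0 h1 6, pow_le_pow_left₀ h0 h1 8,
    pow_le_pow_left₀ h0 h1 10, mul_nonneg h0 h0]

theorem taylor_polynomial_key_lt {x : ℝ} (hx : 0 < x) (hx' : x ≤ 8 / 5) :
    (x - sinTaylor 4 (2 * x) / 2) * (1 - cosTaylor 4 x) <
      sinTaylor 4 x ^ 2 * (sinTaylor 5 x - x * cosTaylor 5 x)
        + sinTaylor 4 x * (sinTaylor 5 x - x * cosTaylor 5 x) ^ 2 / 2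
        + (sinTaylor 5 x - x * cosTaylor 5 x) ^ 3 / 6 := by
  have hR := remainder_poly_pos (sq_nonneg x) (by nlinarith)
  rw [sinTaylor_four, sinTaylor_four, cosTaylor_four, sinTaylor_five_sub_mul_cosTaylor_five]
  linarith [mul_pos (pow_pos hx 7) hR]

theorem sub_sin_mul_cos_mul_one_sub_cos_lt {x : ℝ} (hx : 0 < x) (hx' : x ≤ 8 / 5) :
    (x - sin x * cos x) * (1 - cos x) < (exp ((sin x - x * cos x) / sin x) - 1) * sin x ^ 3 := by
  set S := sinTaylor 4 x with hS_def
  set A := sinTaylor 5 x - x * cosTaylor 5 x with hA_def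
  have hxx : x ^ 2 ≤ 64 / 25 := by nlinarith
  have hS0 : 0 ≤ S := by
    rw [hS_def, sinTaylor_four]
    nlinarith [pow_pos hx 3, pow_pos hx 5, pow_pos hx 7]
  have hA0 : 0 < A := by
    rw [hA_def, sinTaylor_five_sub_mul_cosTaylor_five]
    nlinarith [pow_pos hx 3, pow_pos hx 5, pow_pos hx 7, pow_pos hx 9]
  have hS : S ≤ sin x := sinTaylor_le_sin 1 hx.le
  have hA : A ≤ sin x - x * cos x := by
    have := sign_mul_taylor_sub_sin_sub_mul_cos_nonneg 3 hx.le
    norm_num at this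
    linarith
  have hs : 0 < sin x := sin_pos_of_pos_of_lt_pi hx (by linarith [pi_gt_three])
  have ha : 0 < sin x - x * cos x := hA0.trans_le hA
  have hb0 : 0 ≤ x - sin x * cos x := by
    have := sin_le (by linarith : 0 ≤ 2 * x)
    rw [sin_two_mul] at this
    linarith
  have hb : x - sin x * cos x ≤ x - sinTaylor 4 (2 * x) / 2 := by
    have := sinTaylor_le_sin 1 (by linarith : 0 ≤ 2 * x)
    rw [sin_two_mul] at this
    linarith
  have hd0 : 0 ≤ 1 - cos x := by linarith [cos_le_one x]
  have hd : 1 - cos x ≤ 1 - cosTaylor 4 x := by linarith [cosTaylor_le_cos 1 hx.le]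
  set y := (sin x - x * cos x) / sin x
  have hexp := one_add_add_sq_add_cube_le_exp (div_pos ha hs).le
  calc (x - sin x * cos x) * (1 - cos x)
      ≤ (x - sinTaylor 4 (2 * x) / 2) * (1 - cosTaylor 4 x) := mul_le_mul hb hd hd0 (hb0.trans hb)
    _ < S ^ 2 * A + S * A ^ 2 / 2 + A ^ 3 / 6 := taylor_polynomial_key_lt hx hx'
    _ ≤ sin x ^ 2 * (sin x - x * cos x) + sin x * (sin x - x * cos x) ^ 2 / 2
          + (sin x - x * cos x) ^ 3 / 6 := by gcongr
    _ = (y + y ^ 2 / 2 + y ^ 3 / 6) * sin x ^ 3 := by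
      simp only [y]
      field_simp
    _ ≤ (exp y - 1) * sin x ^ 3 := by gcongr; linarith

noncomputable def sandorF (x : ℝ) : ℝ := (1 - exp (x * (cos x / sin x) - 1)) / (1 - cos x)

theorem hasDerivAt_sandorF {x : ℝ} (hs : sin x ≠ 0) (hc : 1 - cos x ≠ 0) :
    HasDerivAt sandorF
      ((exp (x * (cos x / sin x) - 1) * ((x - sin x * cos x) / sin x ^ 2) * (1 - cos x)
        - (1 - exp (x * (cos x / sin x) - 1)) * sin x) / (1 - cos x) ^ 2) x := by
  have hcot : HasDerivAt (fun t => t * (cos t / sin t)) (-((x - sin x * cos x) / sin x ^ 2)) x := by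
    refine ((hasDerivAt_id x).mul ((hasDerivAt_cos x).div (hasDerivAt_sin x) hs)).congr_deriv ?_
    simp only [id, Pi.div_apply]
    field_simp
    linear_combination (-x) * sin_sq_add_cos_sq x
  have hnum := ((hcot.sub_const 1).exp).const_sub 1
  have hden := (hasDerivAt_cos x).const_sub 1
  refine (hnum.div hden hc).congr_deriv ?_
  ring

theorem mul_cot_sub_one_eq {x : ℝ} (hs : sin x ≠ 0) :
    x * (cos x / sin x) - 1 = -((sin x - x * cos x) / sin x) := by
  field_simp
  ring

theorem one_sub_cos_pos {x : ℝ} (hx : 0 < x) (hx' : x ≤ π) : 0 < 1 - cos x := by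
  have := cos_lt_cos_of_nonneg_of_le_pi le_rfl hx' hx
  rw [cos_zero] at this
  linarith

theorem deriv_sandorF_neg {x : ℝ} (hx : 0 < x) (hx' : x < π / 2) : deriv sandorF x < 0 := by
  have hs : 0 < sin x := sin_pos_of_pos_of_lt_pi hx (by linarith [pi_pos])
  have hc : 0 < 1 - cos x := one_sub_cos_pos hx (by linarith [pi_pos])
  rw [(hasDerivAt_sandorF hs.ne' hc.ne').deriv]
  have hkey := sub_sin_mul_cos_mul_one_sub_cos_lt hx (by linarith [pi_lt_d2])
  set E := exp ((sin x - x * cos x) / sin x)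
  have hE : exp (x * (cos x / sin x) - 1) = E⁻¹ := by rw [mul_cot_sub_one_eq hs.ne', exp_neg]
  rw [hE]
  have hE0 : E ≠ 0 := (exp_pos _).ne'
  have hnum : E⁻¹ * ((x - sin x * cos x) / sin x ^ 2) * (1 - cos x) - (1 - E⁻¹) * sin x
      = E⁻¹ / sin x ^ 2 * ((x - sin x * cos x) * (1 - cos x) - (E - 1) * sin x ^ 3) := by
    field_simp
  rw [hnum]
  refine div_neg_of_neg_of_pos (mul_neg_of_pos_of_neg (by positivity) (by linarith)) (by positivity)

theorem continuousOn_sandorF : ContinuousOn sandorF (Ioc 0 (π / 2)) := fun x hx =>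
  (hasDerivAt_sandorF (sin_pos_of_pos_of_lt_pi hx.1 (by linarith [hx.2, pi_pos])).ne'
    (one_sub_cos_pos hx.1 (by linarith [hx.2, pi_pos])).ne').continuousAt.continuousWithinAt

theorem strictAntiOn_sandorF : StrictAntiOn sandorF (Ioc 0 (π / 2)) := by
  refine strictAntiOn_of_deriv_neg (convex_Ioc 0 (π / 2)) continuousOn_sandorF fun x hx => ?_
  rw [interior_Ioc] at hx
  exact deriv_sandorF_neg hx.1 hx.2

theorem sandorF_pi_div_two : sandorF (π / 2) = (exp 1 - 1) / exp 1 := by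
  rw [sandorF, cos_pi_div_two, sin_pi_div_two]
  simp [exp_neg]
  field_simp

theorem sandorF_le {x : ℝ} (hx : 0 < x) (hx1 : x ≤ 1) :
    sandorF x ≤ (1 / 3) / ((1 - x ^ 2 / 6) * (1 / 2 - x ^ 2 / 24)) := by
  have hs : 0 < sin x := sin_pos_of_pos_of_lt_pi hx (by linarith [pi_gt_three])
  have hsx : x - x ^ 3 / 6 ≤ sin x := sin_ge_sub_cube hx.le
  have hd : x ^ 2 / 2 - x ^ 4 / 24 ≤ 1 - cos x := by
    have := cos_le_cosTaylor 1 hx.le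
    norm_num [cosTaylor, Finset.sum_range_succ, Nat.factorial] at this
    linarith
  have ha : sin x - x * cos x ≤ x ^ 3 / 3 := by
    have := sign_mul_taylor_sub_sin_sub_mul_cos_nonneg 0 hx.le
    norm_num [sinTaylor, cosTaylor, Finset.sum_range_succ, Nat.factorial] at this
    linarith
  have hsx0 : 0 < x - x ^ 3 / 6 := by nlinarith
  have hdx0 : 0 < x ^ 2 / 2 - x ^ 4 / 24 := by nlinarith
  set y := (sin x - x * cos x) / sin x
  have hy : y ≤ (x ^ 3 / 3) / (x - x ^ 3 / 6) := div_le_div₀ (by positivity) ha hsx0 hsx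
  have hnum : 1 - exp (-y) ≤ y := by linarith [add_one_le_exp (-y)]
  calc sandorF x = (1 - exp (-y)) / (1 - cos x) := by rw [sandorF, mul_cot_sub_one_eq hs.ne']
    _ ≤ ((x ^ 3 / 3) / (x - x ^ 3 / 6)) / (x ^ 2 / 2 - x ^ 4 / 24) :=
      div_le_div₀ (by positivity) (hnum.trans hy) hdx0 hd
    _ = (1 / 3) / ((1 - x ^ 2 / 6) * (1 / 2 - x ^ 2 / 24)) := by
      have h6 : 1 - x ^ 2 / 6 ≠ 0 := by nlinarith
      have h24 : 1 / 2 - x ^ 2 / 24 ≠ 0 := by nlinarith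
      field_simp

theorem le_sandorF {x : ℝ} (hx : 0 < x) (hx1 : x ≤ 1) :
    (2 / 3 - x ^ 2 / 15) / (1 + x ^ 2 / 3 - x ^ 4 / 30) ≤ sandorF x := by
  have hs : 0 < sin x := sin_pos_of_pos_of_lt_pi hx (by linarith [pi_gt_three])
  have hd : 0 < 1 - cos x := one_sub_cos_pos hx (by linarith [pi_gt_three])
  have hd' : 1 - cos x ≤ x ^ 2 / 2 := by linarith [one_sub_sq_div_two_le_cos (x := x)]
  have ha : x ^ 3 / 3 - x ^ 5 / 30 ≤ sin x - x * cos x := by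
    have := sign_mul_taylor_sub_sin_sub_mul_cos_nonneg 3 hx.le
    rw [sinTaylor_five_sub_mul_cosTaylor_five] at this
    nlinarith [pow_pos hx 7, pow_le_one₀ hx.le hx1 (n := 2)]
  have ha0 : 0 ≤ x ^ 3 / 3 - x ^ 5 / 30 := by
    nlinarith [pow_pos hx 3, pow_le_one₀ hx.le hx1 (n := 2)]
  have hy₀ : 0 ≤ x ^ 2 / 3 - x ^ 4 / 30 := by nlinarith
  set y₀ := x ^ 2 / 3 - x ^ 4 / 30
  set y := (sin x - x * cos x) / sin x
  have hy : y₀ ≤ y := by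
    calc y₀ = (x ^ 3 / 3 - x ^ 5 / 30) / x := by field_simp; ring
      _ ≤ y := div_le_div₀ (ha0.trans ha) ha hs (sin_le hx.le)
  have hnum : y / (1 + y) ≤ 1 - exp (-y) := by
    have hexp : exp (-y) ≤ 1 / (1 + y) := by
      rw [exp_neg, one_div]
      exact inv_anti₀ (by linarith) (by linarith [add_one_le_exp y])
    have hy1 : y / (1 + y) = 1 - 1 / (1 + y) := by
      have : 1 + y ≠ 0 := by linarith
      field_simp
      ring
    linarith
  have hmono : y₀ / (1 + y₀) ≤ y / (1 + y) := by
    rw [div_le_div_iff₀ (by linarith) (by linarith)]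
    nlinarith
  calc (2 / 3 - x ^ 2 / 15) / (1 + x ^ 2 / 3 - x ^ 4 / 30) = (y₀ / (1 + y₀)) / (x ^ 2 / 2) := by
        simp only [y₀]
        field_simp
        ring
    _ ≤ (y / (1 + y)) / (1 - cos x) :=
      div_le_div₀ (div_nonneg (hy₀.trans hy) (by linarith)) hmono hd hd'
    _ ≤ (1 - exp (-y)) / (1 - cos x) := by gcongr
    _ = sandorF x := by rw [sandorF, mul_cot_sub_one_eq hs.ne']

theorem tendsto_sandorF_zero : Tendsto sandorF (𝓝[>] 0) (𝓝 (2 / 3)) := by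
  have hlow : Tendsto (fun x : ℝ => (2 / 3 - x ^ 2 / 15) / (1 + x ^ 2 / 3 - x ^ 4 / 30)) (𝓝 0)
      (𝓝 (2 / 3)) := by
    convert (show ContinuousAt (fun x : ℝ => (2 / 3 - x ^ 2 / 15) / (1 + x ^ 2 / 3 - x ^ 4 / 30)) 0
      by fun_prop (disch := norm_num)).tendsto using 2
    norm_num
  have hup : Tendsto (fun x : ℝ => (1 / 3) / ((1 - x ^ 2 / 6) * (1 / 2 - x ^ 2 / 24))) (𝓝 0)
      (𝓝 (2 / 3)) := by
    convert (show ContinuousAt (fun x : ℝ => (1 / 3) / ((1 - x ^ 2 / 6) * (1 / 2 - x ^ 2 / 24))) 0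
      by fun_prop (disch := norm_num)).tendsto using 2
    norm_num
  refine tendsto_of_tendsto_of_tendsto_of_le_of_le' (hlow.mono_left nhdsWithin_le_nhds)
    (hup.mono_left nhdsWithin_le_nhds) ?_ ?_
  all_goals filter_upwards [Ioo_mem_nhdsGT one_pos] with x hx
  · exact le_sandorF hx.1 hx.2.le
  · exact sandorF_le hx.1 hx.2.le

theorem sandor_lemma2 :
    StrictAntiOn (fun x : ℝ => (1 - exp (x * (cos x / sin x) - 1)) / (1 - cos x))
      (Ioo 0 (π/2)) ∧
    (fun x : ℝ => (1 - exp (x * (cos x / sin x) - 1)) / (1 - cos x)) '' Ioo 0 (π/2) =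
      Ioo ((exp 1 - 1) / exp 1) (2/3) := by
  refine ⟨strictAntiOn_sandorF.mono Ioo_subset_Ioc_self, ?_⟩
  rw [← sandorF_pi_div_two]
  exact image_Ioo_eq_Ioo_of_strictAntiOn pi_div_two_pos continuousOn_sandorF strictAntiOn_sandorF
    tendsto_sandorF_zero
end

section
/- The function f(x) = sin(x)/(x·(cos(x) - e^{x·cot(x)-1} + 1)) is strictly increasing on (0, π/2), with range (1, 2e/(π(e-1))). -/
/-!
Write `E x = exp (x cot x - 1)` and `D x = cos x - E x + 1`, so that the function is
`F x = sin x / (x D x)` and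
`F' x = (x - sin x) (1 + cos x - E x (x + sin x) / sin x) / (x D x)²`.
Both `F' > 0` and `D > 0` on `(0, π/2)` therefore reduce to
`E x < sin x (1 + cos x) / (x + sin x)`, i.e. to the positivity of
`ψ x = log (sin x (1 + cos x) / (x + sin x)) - (x cot x - 1)`.
Now `ψ → 0` at `0⁺` and `ψ' = Q / (sin² x (x + sin x))` with `Q = x² + x sin x cos x - 2 sin² x`;
since `Q 0 = Q' 0 = 0` and `Q'' = 4 sin x (sin x - x cos x) > 0`, `Q` and hence `ψ'` are positive.
The range is then read off from continuity, monotonicity and the one-sided limits: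
`F → 1` at `0⁺` because `sin x / x → 1` and `x cot x → 1`, and `F` is continuous at `π/2`.
-/

open Real Set Filter Topology

section Monotone

variable {f : ℝ → ℝ} {a b l : ℝ}

lemma StrictMonoOn.lt_of_tendsto_nhdsGT (hf : StrictMonoOn f (Ioo a b))
    (hl : Tendsto f (𝓝[>] a) (𝓝 l)) {x : ℝ} (hx : x ∈ Ioo a b) : l < f x := by
  have hle : ∀ y ∈ Ioo a b, l ≤ f y := fun y hy ↦ le_of_tendsto hl <| by
    filter_upwards [Ioo_mem_nhdsGT hy.1] with t ht
    exact (hf ⟨ht.1, ht.2.trans hy.2⟩ hy ht.2).le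
  obtain ⟨m, ham, hmx⟩ := exists_between hx.1
  exact (hle m ⟨ham, hmx.trans hx.2⟩).trans_lt (hf ⟨ham, hmx.trans hx.2⟩ hx hmx)

lemma StrictMonoOn.lt_of_tendsto_nhdsLT (hf : StrictMonoOn f (Ioo a b))
    (hl : Tendsto f (𝓝[<] b) (𝓝 l)) {x : ℝ} (hx : x ∈ Ioo a b) : f x < l := by
  have hle : ∀ y ∈ Ioo a b, f y ≤ l := fun y hy ↦ ge_of_tendsto hl <| by
    filter_upwards [Ioo_mem_nhdsLT hy.2] with t ht
    exact (hf hy ⟨hy.1.trans ht.1, ht.2⟩ ht.1).le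
  obtain ⟨m, hxm, hmb⟩ := exists_between hx.2
  exact (hf hx ⟨hx.1.trans hxm, hmb⟩ hxm).trans_le (hle m ⟨hx.1.trans hxm, hmb⟩)

lemma StrictMonoOn.image_Ioo_eq_Ioo {l' : ℝ} (hab : a < b) (hf : StrictMonoOn f (Ioo a b))
    (hfc : ContinuousOn f (Ioo a b)) (ha : Tendsto f (𝓝[>] a) (𝓝 l))
    (hb : Tendsto f (𝓝[<] b) (𝓝 l')) : f '' Ioo a b = Ioo l l' := by
  refine Subset.antisymm ?_ fun y hy ↦ ?_
  · rintro _ ⟨x, hx, rfl⟩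
    exact ⟨hf.lt_of_tendsto_nhdsGT ha hx, hf.lt_of_tendsto_nhdsLT hb hx⟩
  obtain ⟨u, hyu, hu⟩ := ((ha.eventually_lt_const hy.1).and (Ioo_mem_nhdsGT hab)).exists
  obtain ⟨v, hyv, hv⟩ := ((hb.eventually_const_lt hy.2).and (Ioo_mem_nhdsLT hab)).exists
  exact isPreconnected_Ioo.intermediate_value hu hv hfc ⟨hyu.le, hyv.le⟩

lemma strictMonoOn_Ioo_of_hasDerivAt_pos {f' : ℝ → ℝ}
    (hf : ∀ x ∈ Ioo a b, HasDerivAt f (f' x) x) (hf' : ∀ x ∈ Ioo a b, 0 < f' x) :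
    StrictMonoOn f (Ioo a b) :=
  strictMonoOn_of_hasDerivWithinAt_pos (convex_Ioo a b)
    (fun x hx ↦ (hf x hx).continuousAt.continuousWithinAt)
    (fun x hx ↦ (hf x (interior_subset hx)).hasDerivWithinAt)
    (fun x hx ↦ hf' x (interior_subset hx))

lemma pos_of_hasDerivAt_pos_of_eq_zero {f' : ℝ → ℝ} (hf : ∀ x, HasDerivAt f (f' x) x)
    (ha : f a = 0) {x : ℝ} (hax : a < x) (hf' : ∀ y ∈ Ioo a x, 0 < f' y) : 0 < f x := by
  have hmono : StrictMonoOn f (Icc a x) :=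
    strictMonoOn_of_hasDerivWithinAt_pos (convex_Icc a x)
      (fun y _ ↦ (hf y).continuousAt.continuousWithinAt) (fun y _ ↦ (hf y).hasDerivWithinAt)
      (by simpa only [interior_Icc] using hf')
  simpa only [ha] using hmono (left_mem_Icc.2 hax.le) (right_mem_Icc.2 hax.le) hax

end Monotone

lemma Real.tendsto_sin_div_self : Tendsto (fun x ↦ sin x / x) (𝓝[≠] 0) (𝓝 1) := by
  rw [← sinc_zero]
  exact (continuous_sinc.tendsto 0).mono_left nhdsWithin_le_nhds |>.congr'
    (eventually_nhdsWithin_of_forall fun x hx ↦ sinc_of_ne_zero hx)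

lemma Real.tendsto_mul_cot : Tendsto (fun x ↦ x * (cos x / sin x)) (𝓝[≠] 0) (𝓝 1) := by
  have h := ((continuous_cos.tendsto 0).mono_left nhdsWithin_le_nhds).div
    tendsto_sin_div_self one_ne_zero
  rw [cos_zero, div_one] at h
  refine h.congr fun x ↦ ?_
  show cos x / (sin x / x) = _
  rw [div_div_eq_mul_div, mul_comm, mul_div_assoc]

lemma Real.mul_cos_lt_sin {x : ℝ} (h0 : 0 < x) (hx : x < π / 2) : x * cos x < sin x := by
  have hc : 0 < cos x := cos_pos_of_mem_Ioo ⟨by linarith, hx⟩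
  simpa only [tan_eq_sin_div_cos, lt_div_iff₀ hc] using lt_tan h0 hx

lemma Real.hasDerivAt_mul_cot {x : ℝ} (hs : sin x ≠ 0) :
    HasDerivAt (fun y ↦ y * (cos y / sin y)) (cos x / sin x - x / sin x ^ 2) x := by
  refine ((hasDerivAt_id' x).fun_mul
    ((hasDerivAt_cos x).fun_div (hasDerivAt_sin x) hs)).congr_deriv ?_
  field_simp
  linear_combination -x * sin_sq_add_cos_sq x

namespace Sandor

noncomputable def Q (x : ℝ) : ℝ := x ^ 2 + x * sin x * cos x - 2 * sin x ^ 2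

noncomputable def Q' (x : ℝ) : ℝ := 2 * x - 3 * sin x * cos x + x * (cos x ^ 2 - sin x ^ 2)

noncomputable def psi (x : ℝ) : ℝ :=
  log (sin x * (1 + cos x) / (x + sin x)) - (x * (cos x / sin x) - 1)

noncomputable def E (x : ℝ) : ℝ := exp (x * (cos x / sin x) - 1)

noncomputable def D (x : ℝ) : ℝ := cos x - E x + 1

noncomputable def F (x : ℝ) : ℝ := sin x / (x * D x)

lemma sin_pos_of_mem {x : ℝ} (hx : x ∈ Ioo 0 (π / 2)) : 0 < sin x :=
  sin_pos_of_mem_Ioo ⟨hx.1, hx.2.trans (half_lt_self pi_pos)⟩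

lemma cos_pos_of_mem {x : ℝ} (hx : x ∈ Ioo 0 (π / 2)) : 0 < cos x :=
  cos_pos_of_mem_Ioo ⟨by linarith [hx.1, pi_pos], hx.2⟩

lemma hasDerivAt_Q (x : ℝ) : HasDerivAt Q (Q' x) x := by
  refine ((((hasDerivAt_pow 2 x).fun_add (((hasDerivAt_id' x).fun_mul (hasDerivAt_sin x)).fun_mul
    (hasDerivAt_cos x))).fun_sub (((hasDerivAt_sin x).fun_pow 2).const_mul 2))).congr_deriv ?_
  simp only [Q']
  ring

lemma hasDerivAt_Q' (x : ℝ) : HasDerivAt Q' (4 * sin x * (sin x - x * cos x)) x := by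
  refine ((((hasDerivAt_id' x).const_mul 2).fun_sub (((hasDerivAt_sin x).const_mul 3).fun_mul
    (hasDerivAt_cos x))).fun_add ((hasDerivAt_id' x).fun_mul
    (((hasDerivAt_cos x).fun_pow 2).fun_sub ((hasDerivAt_sin x).fun_pow 2)))).congr_deriv ?_
  linear_combination (-2 : ℝ) * sin_sq_add_cos_sq x

lemma hasDerivAt_psi {x : ℝ} (hs : sin x ≠ 0) (hc : 1 + cos x ≠ 0) (hxs : x + sin x ≠ 0) :
    HasDerivAt psi (Q x / (sin x ^ 2 * (x + sin x))) x := by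
  have hg := ((hasDerivAt_sin x).fun_mul ((hasDerivAt_cos x).const_add 1)).fun_div
    ((hasDerivAt_id' x).fun_add (hasDerivAt_sin x)) hxs
  refine ((hg.log (by positivity)).fun_sub
    ((hasDerivAt_mul_cot hs).sub_const 1)).congr_deriv ?_
  simp only [Q]
  field_simp
  linear_combination -(sin x * (x + sin x)) * sin_sq_add_cos_sq x

lemma hasDerivAt_F {x : ℝ} (hs : sin x ≠ 0) (hxD : x * D x ≠ 0) :
    HasDerivAt F ((x - sin x) * (1 + cos x - E x * (x + sin x) / sin x) / (x * D x) ^ 2) x := by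
  have hE : HasDerivAt E (E x * (cos x / sin x - x / sin x ^ 2)) x :=
    ((hasDerivAt_mul_cot hs).sub_const 1).exp
  refine ((hasDerivAt_sin x).fun_div ((hasDerivAt_id' x).fun_mul
    (((hasDerivAt_cos x).fun_sub hE).add_const 1)) hxD).congr_deriv ?_
  simp only [D] at hxD ⊢
  field_simp
  congr 1
  linear_combination x * sin x * sin_sq_add_cos_sq x

lemma tendsto_psi : Tendsto psi (𝓝[>] 0) (𝓝 0) := by
  have hg : Tendsto (fun x ↦ sin x / x * (1 + cos x) / (1 + sin x / x)) (𝓝[≠] 0) (𝓝 1) := by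
    have h := (tendsto_sin_div_self.mul ((continuous_cos.tendsto 0).const_add 1 |>.mono_left
      nhdsWithin_le_nhds)).div (tendsto_sin_div_self.const_add 1) (by norm_num)
    norm_num at h
    exact h
  have h := ((continuousAt_log one_ne_zero).tendsto.comp hg).sub
    (tendsto_mul_cot.sub_const 1)
  rw [log_one, sub_self, sub_zero] at h
  refine (h.mono_left (nhdsGT_le_nhdsNE 0)).congr' ?_
  filter_upwards [self_mem_nhdsWithin] with x (hx : 0 < x)
  simp only [psi, Function.comp_apply]
  congr 2
  field_simp

lemma Q'_pos {x : ℝ} (hx : x ∈ Ioo 0 (π / 2)) : 0 < Q' x :=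
  pos_of_hasDerivAt_pos_of_eq_zero hasDerivAt_Q' (by simp [Q']) hx.1 fun y hy ↦ by
    have hy' : y ∈ Ioo 0 (π / 2) := ⟨hy.1, hy.2.trans hx.2⟩
    have := mul_cos_lt_sin hy'.1 hy'.2
    have := sin_pos_of_mem hy'
    positivity

lemma Q_pos {x : ℝ} (hx : x ∈ Ioo 0 (π / 2)) : 0 < Q x :=
  pos_of_hasDerivAt_pos_of_eq_zero hasDerivAt_Q (by simp [Q]) hx.1 fun y hy ↦
    Q'_pos ⟨hy.1, hy.2.trans hx.2⟩

lemma strictMonoOn_psi : StrictMonoOn psi (Ioo 0 (π / 2)) := by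
  refine strictMonoOn_Ioo_of_hasDerivAt_pos (f' := fun x ↦ Q x / (sin x ^ 2 * (x + sin x)))
    (fun x hx ↦ ?_) fun x hx ↦ ?_
  · have hs := sin_pos_of_mem hx
    have hc := cos_pos_of_mem hx
    exact hasDerivAt_psi hs.ne' (by positivity) (by linarith [hx.1])
  · have := sin_pos_of_mem hx
    have := Q_pos hx
    have := hx.1
    positivity

lemma E_mul_lt {x : ℝ} (hx : x ∈ Ioo 0 (π / 2)) : E x * (x + sin x) < sin x * (1 + cos x) := by
  have hs := sin_pos_of_mem hx
  have hc := cos_pos_of_mem hx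
  have hxs : 0 < x + sin x := by linarith [hx.1]
  have hpsi := strictMonoOn_psi.lt_of_tendsto_nhdsGT tendsto_psi hx
  rw [psi, sub_pos, lt_log_iff_exp_lt (by positivity)] at hpsi
  exact (lt_div_iff₀ hxs).1 hpsi

lemma mul_D_pos {x : ℝ} (hx : x ∈ Ioo 0 (π / 2)) : 0 < x * D x := by
  have := E_mul_lt hx
  have := sin_lt hx.1
  have := sin_pos_of_mem hx
  have := cos_pos_of_mem hx
  have : E x < 1 + cos x := by nlinarith
  exact mul_pos hx.1 (by simp only [D]; linarith)

lemma strictMonoOn_F : StrictMonoOn F (Ioo 0 (π / 2)) := by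
  refine strictMonoOn_Ioo_of_hasDerivAt_pos
    (fun x hx ↦ hasDerivAt_F (sin_pos_of_mem hx).ne' (mul_D_pos hx).ne') fun x hx ↦ ?_
  have hs := sin_pos_of_mem hx
  have : 0 < x - sin x := sub_pos.2 (sin_lt hx.1)
  have : 0 < 1 + cos x - E x * (x + sin x) / sin x :=
    sub_pos.2 ((div_lt_iff₀ hs).2 (by linarith [E_mul_lt hx]))
  have := mul_D_pos hx
  positivity

lemma continuousOn_F : ContinuousOn F (Ioo 0 (π / 2)) := fun _ hx ↦
  (hasDerivAt_F (sin_pos_of_mem hx).ne' (mul_D_pos hx).ne').continuousAt.continuousWithinAt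

lemma tendsto_F_nhdsGT_zero : Tendsto F (𝓝[>] 0) (𝓝 1) := by
  have hE : Tendsto E (𝓝[≠] 0) (𝓝 1) := by
    have h := (tendsto_mul_cot.sub_const 1).rexp
    rwa [sub_self, exp_zero] at h
  have hD : Tendsto D (𝓝[≠] 0) (𝓝 1) := by
    show Tendsto (fun x ↦ cos x - E x + 1) _ _
    simpa using (((continuous_cos.tendsto 0).mono_left nhdsWithin_le_nhds).sub hE).add_const 1
  have h := (tendsto_sin_div_self.div hD one_ne_zero).mono_left (nhdsGT_le_nhdsNE 0)
  rw [div_one] at h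
  exact h.congr fun x ↦ div_div _ _ _

lemma D_pi_div_two : D (π / 2) = 1 - exp (-1) := by
  simp [D, E]
  ring

lemma F_pi_div_two : F (π / 2) = 2 * exp 1 / (π * (exp 1 - 1)) := by
  rw [F, D_pi_div_two, sin_pi_div_two, exp_neg]
  have := exp_pos 1
  have : exp 1 - 1 ≠ 0 := by linarith [add_one_lt_exp one_ne_zero]
  field_simp

lemma tendsto_F_nhdsLT_pi_div_two :
    Tendsto F (𝓝[<] (π / 2)) (𝓝 (2 * exp 1 / (π * (exp 1 - 1)))) := by
  have hD : 0 < D (π / 2) := by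
    rw [D_pi_div_two, sub_pos]
    exact exp_lt_one_iff.2 (by norm_num)
  rw [← F_pi_div_two]
  exact (hasDerivAt_F (by simp) (mul_pos pi_div_two_pos hD).ne').continuousAt.tendsto.mono_left
    nhdsWithin_le_nhds

end Sandor

theorem sandor_lemma3 :
    StrictMonoOn (fun x : ℝ =>
        sin x / (x * (cos x - exp (x * (cos x / sin x) - 1) + 1))) (Ioo 0 (π/2)) ∧
    (fun x : ℝ =>
        sin x / (x * (cos x - exp (x * (cos x / sin x) - 1) + 1))) '' Ioo 0 (π/2) =
      Ioo 1 (2 * exp 1 / (π * (exp 1 - 1))) :=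
  ⟨Sandor.strictMonoOn_F, Sandor.strictMonoOn_F.image_Ioo_eq_Ioo pi_div_two_pos
    Sandor.continuousOn_F Sandor.tendsto_F_nhdsGT_zero Sandor.tendsto_F_nhdsLT_pi_div_two⟩
end

section
/- The function g(x) = log((2 + 1/cos(x))/(2 + cos(x))) / log(1/cos(x)) is strictly increasing on (0, π/2), with range (2/3, 1). -/
/-!
Substituting `t = log (1 / cos x)`, which increases from `0` to `∞` on `(0, π/2)`, turns `g` into
`N t / t` with `N t = log ((2 + eᵗ) / (2 + e⁻ᵗ))`. Since `N 0 = 0` and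
`N' t = 1 - 3 / (5 + 4 cosh t)` increases on `[0, ∞)`, `N` is strictly convex there, so its secant
slope `N t / t` through the origin strictly increases, from `N' 0 = 2/3` as `t → 0⁺` to `1` as
`t → ∞` (where `N t - t` stays bounded).
-/

open Real Set Filter Topology

theorem StrictMonoOn.image_Ioo_eq_of_tendsto {α β : Type*} [ConditionallyCompleteLinearOrder α]
    [TopologicalSpace α] [OrderTopology α] [DenselyOrdered α]
    [LinearOrder β] [TopologicalSpace β] [OrderClosedTopology β]
    {f : α → β} {a b : α} {l u : β} (hab : a < b) (hf : StrictMonoOn f (Ioo a b))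
    (hfc : ContinuousOn f (Ioo a b)) (hl : Tendsto f (𝓝[>] a) (𝓝 l))
    (hu : Tendsto f (𝓝[<] b) (𝓝 u)) : f '' Ioo a b = Ioo l u := by
  have := nhdsGT_neBot_of_exists_gt ⟨b, hab⟩
  have := nhdsLT_neBot_of_exists_lt ⟨a, hab⟩
  refine subset_antisymm ?_ ?_
  · rintro _ ⟨x, hx, rfl⟩
    obtain ⟨y, hay, hyx⟩ := exists_between hx.1
    obtain ⟨z, hxz, hzb⟩ := exists_between hx.2
    have hy : y ∈ Ioo a b := ⟨hay, hyx.trans hx.2⟩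
    have hz : z ∈ Ioo a b := ⟨hx.1.trans hxz, hzb⟩
    constructor
    · refine (le_of_tendsto hl ?_).trans_lt (hf hy hx hyx)
      filter_upwards [Ioo_mem_nhdsGT hay] with s hs
      exact (hf ⟨hs.1, hs.2.trans hy.2⟩ hy hs.2).le
    · refine (hf hx hz hxz).trans_le (ge_of_tendsto hu ?_)
      filter_upwards [Ioo_mem_nhdsLT hzb] with s hs
      exact (hf hz ⟨hz.1.trans hs.1, hs.2⟩ hs.1).le
  · rw [← nhdsWithin_Ioo_eq_nhdsGT hab] at hl
    rw [← nhdsWithin_Ioo_eq_nhdsLT hab] at hu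
    have := left_nhdsWithin_Ioo_neBot hab
    have := right_nhdsWithin_Ioo_neBot hab
    exact isPreconnected_Ioo.intermediate_value_Ioo (l₁ := 𝓝[Ioo a b] a) (l₂ := 𝓝[Ioo a b] b)
      inf_le_right inf_le_right hfc hl hu

noncomputable def sandorNum (t : ℝ) : ℝ := log ((2 + exp t) / (2 + exp (-t)))

noncomputable def sandorRatio (t : ℝ) : ℝ := sandorNum t / t

@[simp] lemma sandorNum_zero : sandorNum 0 = 0 := by simp [sandorNum]

lemma sandorNum_eq_sub (t : ℝ) : sandorNum t = log (2 + exp t) - log (2 + exp (-t)) :=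
  log_div (by positivity) (by positivity)

lemma hasDerivAt_sandorNum (t : ℝ) : HasDerivAt sandorNum (1 - 3 / (5 + 4 * cosh t)) t := by
  have hexp : HasDerivAt (fun s => log (2 + exp s)) (exp t / (2 + exp t)) t :=
    ((hasDerivAt_exp t).const_add 2).log (by positivity)
  have hexp_neg : HasDerivAt (fun s => log (2 + exp (-s))) (-(exp (-t) / (2 + exp (-t)))) t := by
    convert ((hasDerivAt_neg t).exp.const_add 2).log (by positivity) using 1
    ring
  rw [show sandorNum = _ from funext sandorNum_eq_sub]
  refine (hexp.sub hexp_neg).congr_deriv ?_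
  have hprod : exp t * exp (-t) = 1 := by rw [← exp_add, add_neg_cancel, exp_zero]
  rw [cosh_eq]
  field_simp
  linear_combination (16 + 4 * exp t + 4 * exp (-t)) * hprod

lemma continuous_sandorNum : Continuous sandorNum :=
  continuous_iff_continuousAt.2 fun t => (hasDerivAt_sandorNum t).continuousAt

lemma strictConvexOn_sandorNum : StrictConvexOn ℝ (Ici 0) sandorNum := by
  refine StrictMonoOn.strictConvexOn_of_deriv (convex_Ici 0) continuous_sandorNum.continuousOn ?_
  rw [interior_Ici, funext fun t => (hasDerivAt_sandorNum t).deriv]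
  intro s hs t ht hst
  have := cosh_strictMonoOn (Ioi_subset_Ici_self hs) (Ioi_subset_Ici_self ht) hst
  have := cosh_pos s
  dsimp only
  gcongr 1 - 3 / (5 + 4 * ?_)

lemma strictMonoOn_sandorRatio : StrictMonoOn sandorRatio (Ioi 0) := by
  intro s hs t ht hst
  simpa [sandorRatio] using strictConvexOn_sandorNum.secant_strict_mono (a := 0) self_mem_Ici
    (Ioi_subset_Ici_self hs) (Ioi_subset_Ici_self ht) hs.ne' ht.ne' hst

lemma continuousOn_sandorRatio : ContinuousOn sandorRatio (Ioi 0) :=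
  continuous_sandorNum.continuousOn.div continuousOn_id fun _ ht => ht.ne'

lemma tendsto_sandorRatio_nhdsGT_zero : Tendsto sandorRatio (𝓝[>] 0) (𝓝 (2 / 3)) := by
  have := (hasDerivAt_sandorNum 0).tendsto_slope_zero_right
  norm_num at this
  convert this using 2 with t
  simp [sandorRatio, div_eq_inv_mul]

lemma sandorNum_sub_self (t : ℝ) :
    sandorNum t - t = log ((1 + 2 * exp (-t)) / (2 + exp (-t))) := by
  have : (1 + 2 * exp (-t)) / (2 + exp (-t)) = (2 + exp t) / (2 + exp (-t)) / exp t := by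
    rw [exp_neg]
    field_simp
    ring
  rw [this, log_div (by positivity) (by positivity), log_exp, sandorNum]

lemma tendsto_sandorRatio_atTop : Tendsto sandorRatio atTop (𝓝 1) := by
  have hdiff : Tendsto (fun t => sandorNum t - t) atTop (𝓝 (log (1 / 2))) := by
    simp_rw [sandorNum_sub_self]
    have hc : ContinuousAt (fun y : ℝ => log ((1 + 2 * y) / (2 + y))) 0 := by
      fun_prop (disch := norm_num)
    simpa [Function.comp_def] using hc.tendsto.comp tendsto_exp_neg_atTop_nhds_zero
  have := (hdiff.div_atTop tendsto_id).const_add 1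
  rw [add_zero] at this
  refine this.congr' ?_
  filter_upwards [eventually_ne_atTop 0] with t ht
  simp only [sandorRatio, id]
  field_simp
  ring

lemma cos_mem_Ioo_zero_one {x : ℝ} (hx : x ∈ Ioo 0 (π / 2)) : cos x ∈ Ioo 0 1 :=
  ⟨cos_pos_of_mem_Ioo ⟨by linarith [hx.1, pi_pos], hx.2⟩,
    cos_zero ▸ cos_lt_cos_of_nonneg_of_le_pi le_rfl (by linarith [hx.2, pi_pos]) hx.1⟩

lemma mapsTo_log_one_div_cos : MapsTo (fun x => log (1 / cos x)) (Ioo 0 (π / 2)) (Ioi 0) :=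
  fun _ hx => log_pos (one_lt_one_div (cos_mem_Ioo_zero_one hx).1 (cos_mem_Ioo_zero_one hx).2)

lemma strictMonoOn_log_one_div_cos : StrictMonoOn (fun x => log (1 / cos x)) (Ioo 0 (π / 2)) :=
  fun x hx y hy hxy => log_lt_log (one_div_pos.2 (cos_mem_Ioo_zero_one hx).1)
    (one_div_lt_one_div_of_lt (cos_mem_Ioo_zero_one hy).1
      (cos_lt_cos_of_nonneg_of_le_pi hx.1.le (by linarith [hy.2, pi_pos]) hxy))

lemma continuousOn_log_one_div_cos : ContinuousOn (fun x => log (1 / cos x)) (Ioo 0 (π / 2)) :=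
  fun x hx => by
    have := (cos_mem_Ioo_zero_one hx).1
    fun_prop (disch := positivity)

lemma tendsto_log_one_div_cos_nhdsGT_zero :
    Tendsto (fun x => log (1 / cos x)) (𝓝[>] 0) (𝓝[>] 0) := by
  refine tendsto_nhdsWithin_iff.2 ⟨?_, ?_⟩
  · have : ContinuousAt (fun x => log (1 / cos x)) 0 := by fun_prop (disch := simp)
    simpa using this.tendsto.mono_left nhdsWithin_le_nhds
  · filter_upwards [Ioo_mem_nhdsGT pi_div_two_pos] with x hx using mapsTo_log_one_div_cos hx

lemma tendsto_log_one_div_cos_nhdsLT_pi_div_two :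
    Tendsto (fun x => log (1 / cos x)) (𝓝[<] (π / 2)) atTop := by
  have hcos : Tendsto cos (𝓝[<] (π / 2)) (𝓝[>] 0) := by
    refine tendsto_nhdsWithin_iff.2 ⟨?_, ?_⟩
    · simpa using continuous_cos.continuousAt.tendsto.mono_left (nhdsWithin_le_nhds (a := π / 2))
    · filter_upwards [Ioo_mem_nhdsLT pi_div_two_pos] with x hx using (cos_mem_Ioo_zero_one hx).1
  simpa [Function.comp_def] using tendsto_log_atTop.comp (tendsto_inv_nhdsGT_zero.comp hcos)

theorem sandor_g_mono :
    StrictMonoOn (fun x : ℝ =>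
        log ((2 + 1 / cos x) / (2 + cos x)) / log (1 / cos x)) (Ioo 0 (π/2)) ∧
    (fun x : ℝ =>
        log ((2 + 1 / cos x) / (2 + cos x)) / log (1 / cos x)) '' Ioo 0 (π/2) =
      Ioo (2/3) 1 := by
  have hg : EqOn (fun x : ℝ => log ((2 + 1 / cos x) / (2 + cos x)) / log (1 / cos x))
      (sandorRatio ∘ fun x => log (1 / cos x)) (Ioo 0 (π / 2)) := fun x hx => by
    have hsec : 0 < 1 / cos x := one_div_pos.2 (cos_mem_Ioo_zero_one hx).1
    simp only [Function.comp_apply, sandorRatio, sandorNum, exp_neg, exp_log hsec, inv_div,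
      div_one]
  have hmono : StrictMonoOn _ (Ioo 0 (π / 2)) :=
    (strictMonoOn_sandorRatio.comp strictMonoOn_log_one_div_cos mapsTo_log_one_div_cos).congr
      hg.symm
  refine ⟨hmono, hmono.image_Ioo_eq_of_tendsto pi_div_two_pos ?_ ?_ ?_⟩
  · exact (continuousOn_sandorRatio.comp continuousOn_log_one_div_cos
      mapsTo_log_one_div_cos).congr hg
  · refine (tendsto_sandorRatio_nhdsGT_zero.comp tendsto_log_one_div_cos_nhdsGT_zero).congr' ?_
    filter_upwards [Ioo_mem_nhdsGT pi_div_two_pos] with x hx using (hg hx).symm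
  · refine (tendsto_sandorRatio_atTop.comp tendsto_log_one_div_cos_nhdsLT_pi_div_two).congr' ?_
    filter_upwards [Ioo_mem_nhdsLT pi_div_two_pos] with x hx using (hg hx).symm
end

section
/- For all a, b > 0 with a ≠ b, ((2 + G/A)/(2 + A/G))^3 < H/A < ((2 + G/A)/(2 + A/G))^2, where A = (a+b)/2, G = √(ab), H = 2ab/(a+b). -/
open Real

theorem sandor_thm3a (a b : ℝ) (ha : 0 < a) (hb : 0 < b) (hab : a ≠ b) :
    ((2 + Real.sqrt (a * b) / ((a + b) / 2)) / (2 + ((a + b) / 2) / Real.sqrt (a * b))) ^ (3 : ℕ) <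
      (2 * a * b / (a + b)) / ((a + b) / 2) ∧
    (2 * a * b / (a + b)) / ((a + b) / 2) <
      ((2 + Real.sqrt (a * b) / ((a + b) / 2)) / (2 + ((a + b) / 2) / Real.sqrt (a * b))) ^ (2 : ℕ) := by
  have hab' : 0 < a + b := by linarith
  have hs0 : 0 < Real.sqrt (a * b) := Real.sqrt_pos.mpr (by positivity)
  set s := Real.sqrt (a * b) with hs
  set A := (a + b) / 2 with hA
  have hA0 : 0 < A := by positivity
  have hs2 : s ^ 2 = a * b := Real.sq_sqrt (by positivity)
  have hsA : s < A := by
    have h1 : s ^ 2 < A ^ 2 := by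
      have hne : a - b ≠ 0 := sub_ne_zero.mpr hab
      have : 0 < (a - b) ^ 2 := by positivity
      rw [hs2]; simp only [hA]; nlinarith
    nlinarith
  have hratio : (2 + s / A) / (2 + A / s) = s * (2 * A + s) / ((2 * s + A) * A) := by
    field_simp
  have hH : 2 * a * b / (a + b) / A = s ^ 2 / A ^ 2 := by
    rw [hs2]; field_simp [hA]; ring
  rw [hratio, hH]
  have hd : 0 < (2 * s + A) * A := by positivity
  have h3 : 0 < (A - s) ^ 3 * (A + s) :=
    mul_pos (pow_pos (sub_pos.mpr hsA) 3) (by positivity)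
  clear_value s A
  clear hs hA hs2 hratio hH hab hab' ha hb
  constructor
  · rw [div_pow, div_lt_div_iff₀ (by positivity) (by positivity)]
    nlinarith [mul_pos (mul_pos (pow_pos hs0 2) (pow_pos hA0 2)) h3]
  · rw [div_pow, div_lt_div_iff₀ (by positivity) (by positivity)]
    nlinarith [mul_pos (mul_pos (pow_pos hs0 2) (pow_pos hA0 2)) h3,
      mul_pos (mul_pos (pow_pos hs0 2) hA0) (mul_pos (sub_pos.mpr hsA) (add_pos hA0 hs0)),
      mul_pos (mul_pos (pow_pos hs0 2) (mul_pos hA0 hA0)) (sub_pos.mpr hsA)]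
end

section
/- For all a, b > 0 with a ≠ b, G/L < (2/(1 + A/G))^{2/3} < ((1 + G/A)/2)^{2/3} < P/A, where A = (a+b)/2, G = √(ab), L = (a-b)/(log a - log b), and P = (a-b)/(2·arcsin((a-b)/(a+b))). -/
/-!
Write `a = G e^d`, `b = G e^(-d)` with `G = √(ab)` and `d = (log a - log b) / 2`, and put
`θ = arcsin ((a - b) / (a + b))`. Then `G / L = d / sinh d`, `A / G = cosh d`, `G / A = cos θ` and
`P / A = sin θ / θ`. After the half-angle formulas the outer inequalities become Lazarević's
inequality `x³ cosh x < sinh³ x` at `x = d / 2` and the Mitrinović–Adamović inequality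
`x³ cos x < sin³ x` at `x = θ / 2`; the middle one is the harmonic–arithmetic mean inequality
for `1` and `G / A`.
-/

open Real

lemma pos_of_hasDerivAt_pos {f f' : ℝ → ℝ} (hf : ∀ x, HasDerivAt f (f' x) x) (h0 : f 0 = 0)
    (hf' : ∀ x, 0 < x → 0 < f' x) {x : ℝ} (hx : 0 < x) : 0 < f x := by
  have hmono : StrictMonoOn f (Set.Ici 0) := by
    refine strictMonoOn_of_deriv_pos (convex_Ici 0)
      (fun y _ => (hf y).continuousAt.continuousWithinAt) fun y hy => ?_
    rw [interior_Ici] at hy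
    exact (hf y).deriv ▸ hf' y hy
  simpa [h0] using hmono Set.self_mem_Ici hx.le hx

lemma lt_rpow_div_iff {x y : ℝ} (hx : 0 ≤ x) (hy : 0 ≤ y) {m n : ℕ} (hn : n ≠ 0) :
    x < y ^ ((m : ℝ) / n) ↔ x ^ n < y ^ m := by
  rw [div_eq_mul_inv, rpow_mul hy, rpow_natCast,
    lt_rpow_inv_iff_of_pos hx (by positivity) (by positivity), rpow_natCast]

lemma rpow_div_lt_iff {x y : ℝ} (hx : 0 ≤ x) (hy : 0 ≤ y) {m n : ℕ} (hn : n ≠ 0) :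
    x ^ ((m : ℝ) / n) < y ↔ x ^ m < y ^ n := by
  rw [div_eq_mul_inv, rpow_mul hx, rpow_natCast,
    rpow_inv_lt_iff_of_pos (by positivity) hy (by positivity), rpow_natCast]

namespace Real

lemma add_pow_three_div_six_lt_sinh {x : ℝ} (hx : 0 < x) : x + x ^ 3 / 6 < sinh x := by
  have h := sum_le_hasSum (Finset.range 3) (fun n _ => by positivity) (hasSum_sinh x)
  norm_num [Finset.sum_range_succ, Nat.factorial] at h
  linarith [pow_pos hx 5]

lemma sinh_lt_mul_cosh {x : ℝ} (hx : 0 < x) : sinh x < x * cosh x := by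
  obtain ⟨ξ, ⟨hξ0, hξx⟩, hξ⟩ := exists_hasDerivAt_eq_slope sinh cosh hx
    continuous_sinh.continuousOn fun y _ => hasDerivAt_sinh y
  rw [sinh_zero, sub_zero, sub_zero] at hξ
  have h : cosh ξ < cosh x := cosh_lt_cosh.2 (by rwa [abs_of_pos hξ0, abs_of_pos hx])
  rwa [hξ, div_lt_iff₀ hx, mul_comm] at h

/-- Lazarević's inequality. -/
lemma pow_three_mul_cosh_lt_sinh_pow_three {x : ℝ} (hx : 0 < x) :
    x ^ 3 * cosh x < sinh x ^ 3 := by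
  have hderiv (y : ℝ) : HasDerivAt (fun y => sinh y ^ 3 - y ^ 3 * cosh y)
      (cosh y * (3 * sinh y ^ 2 - 3 * y ^ 2) - y ^ 3 * sinh y) y :=
    (((hasDerivAt_sinh y).pow 3).sub ((hasDerivAt_pow 3 y).mul (hasDerivAt_cosh y))).congr_deriv
      (by push_cast; ring)
  have hderiv_pos (y : ℝ) (hy : 0 < y) :
      0 < cosh y * (3 * sinh y ^ 2 - 3 * y ^ 2) - y ^ 3 * sinh y := by
    -- `sinh y > y + y³/6` and `y sinh y < y² cosh y` push the derivative above `y⁶ cosh y / 12`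
    have hsinh := add_pow_three_div_six_lt_sinh hy
    have hsq : (y + y ^ 3 / 6) ^ 2 < sinh y ^ 2 :=
      pow_lt_pow_left₀ hsinh (by positivity) two_ne_zero
    have hcosh := cosh_pos y
    have : y ^ 3 * sinh y < y ^ 3 * (y * cosh y) :=
      mul_lt_mul_of_pos_left (sinh_lt_mul_cosh hy) (by positivity)
    nlinarith [mul_lt_mul_of_pos_left hsq hcosh, mul_pos (pow_pos hy 6) hcosh]
  have := pos_of_hasDerivAt_pos hderiv (by simp) hderiv_pos hx
  linarith

/-- Mitrinović–Adamović inequality. On `(0, 1]` the Taylor bounds `x - x³/6 < sin x` and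
`cos x ≤ 1 - x²/2 + 5x⁴/96 ≤ (1 - x²/6)³` suffice. -/
lemma pow_three_mul_cos_lt_sin_pow_three {x : ℝ} (hx : 0 < x) (hx1 : x ≤ 1) :
    x ^ 3 * cos x < sin x ^ 3 := by
  have hsin := sin_gt_sub_cube hx
  have hcos : cos x ≤ 1 - x ^ 2 / 2 + x ^ 4 * (5 / 96) := by
    have := (abs_le.1 (cos_bound (by rwa [abs_of_pos hx]))).2
    rw [abs_of_pos hx] at this
    linarith
  have hpos : 0 < x - x ^ 3 / 6 := by nlinarith
  have hcube : (x - x ^ 3 / 6) ^ 3 < sin x ^ 3 := pow_lt_pow_left₀ hsin hpos.le three_ne_zero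
  nlinarith [mul_le_mul_of_nonneg_left hcos (pow_pos hx 3).le, pow_pos hx 7, pow_pos hx 9]

end Real

lemma div_sinh_lt_two_div_one_add_cosh_rpow {d : ℝ} (hd : d ≠ 0) :
    d / sinh d < (2 / (1 + cosh d)) ^ ((2 : ℝ) / 3) := by
  wlog hpos : 0 < d generalizing d
  · simpa [sinh_neg, cosh_neg, neg_div_neg_eq] using
      this (neg_ne_zero.2 hd) (neg_pos.2 (lt_of_le_of_ne (not_lt.1 hpos) hd))
  obtain ⟨u, rfl⟩ : ∃ u, d = 2 * u := ⟨d / 2, by ring⟩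
  have hu : 0 < u := by linarith
  have hs := sinh_pos_iff.2 hu
  have hc := cosh_pos u
  have hbase : 2 / (1 + cosh (2 * u)) = (cosh u ^ 2)⁻¹ := by
    rw [cosh_two_mul, sinh_sq, show 1 + (cosh u ^ 2 + (cosh u ^ 2 - 1)) = 2 * cosh u ^ 2 by ring,
      div_mul_cancel_left₀ two_ne_zero]
  rw [sinh_two_mul, hbase]
  refine (lt_rpow_div_iff (m := 2) (n := 3) (by positivity) (by positivity) three_ne_zero).2 ?_
  rw [mul_assoc, mul_div_mul_left _ _ two_ne_zero, div_pow, mul_pow, inv_pow, ← pow_mul,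
    div_lt_iff₀ (by positivity), ← div_eq_inv_mul, lt_div_iff₀ (by positivity)]
  calc u ^ 3 * cosh u ^ (2 * 2) = u ^ 3 * cosh u * cosh u ^ 3 := by ring
    _ < sinh u ^ 3 * cosh u ^ 3 :=
      mul_lt_mul_of_pos_right (pow_three_mul_cosh_lt_sinh_pow_three hu) (pow_pos hc 3)

lemma one_add_cos_div_two_rpow_lt_sin_div {θ : ℝ} (hθ : θ ≠ 0) (hθ2 : |θ| ≤ 2) :
    ((1 + cos θ) / 2) ^ ((2 : ℝ) / 3) < sin θ / θ := by
  wlog hpos : 0 < θ generalizing θ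
  · simpa [sin_neg, cos_neg, neg_div_neg_eq] using
      this (neg_ne_zero.2 hθ) (by rwa [abs_neg]) (neg_pos.2 (lt_of_le_of_ne (not_lt.1 hpos) hθ))
  obtain ⟨w, rfl⟩ : ∃ w, θ = 2 * w := ⟨θ / 2, by ring⟩
  have hw : 0 < w := by linarith
  have hw1 : w ≤ 1 := by rw [abs_of_pos hpos] at hθ2; linarith
  have hc : 0 < cos w := cos_pos_of_mem_Ioo ⟨by linarith [pi_pos], by linarith [pi_gt_three]⟩
  have hs : 0 < sin w := sin_pos_of_pos_of_lt_pi hw (by linarith [pi_gt_three])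
  have hbase : (1 + cos (2 * w)) / 2 = cos w ^ 2 := by rw [cos_two_mul]; ring
  rw [hbase, sin_two_mul, mul_assoc, mul_div_mul_left _ _ two_ne_zero]
  refine (rpow_div_lt_iff (m := 2) (n := 3) (by positivity) (by positivity) three_ne_zero).2 ?_
  rw [div_pow, lt_div_iff₀ (by positivity)]
  calc (cos w ^ 2) ^ 2 * w ^ 3 = w ^ 3 * cos w * cos w ^ 3 := by ring
    _ < sin w ^ 3 * cos w ^ 3 :=
      mul_lt_mul_of_pos_right (pow_three_mul_cos_lt_sin_pow_three hw hw1) (pow_pos hc 3)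
    _ = (sin w * cos w) ^ 3 := by ring

lemma two_div_one_add_lt_one_add_inv_div_two {x : ℝ} (hx : 0 < x) (hx1 : x ≠ 1) :
    2 / (1 + x) < (1 + x⁻¹) / 2 := by
  have h : (1 + x⁻¹) * (1 + x) = 4 + (x - 1) ^ 2 / x := by field_simp; ring
  have : 0 < (x - 1) ^ 2 / x := div_pos (sq_pos_of_ne_zero (sub_ne_zero.2 hx1)) hx
  rw [div_lt_div_iff₀ (by positivity) two_pos, h]
  linarith

lemma sub_eq_two_mul_sqrt_mul_sinh {a b : ℝ} (ha : 0 < a) (hb : 0 < b) :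
    a - b = 2 * √(a * b) * sinh ((log a - log b) / 2) := by
  obtain ⟨α, rfl⟩ : ∃ α, a = exp α := ⟨log a, (exp_log ha).symm⟩
  obtain ⟨β, rfl⟩ : ∃ β, b = exp β := ⟨log b, (exp_log hb).symm⟩
  rw [log_exp, log_exp, ← exp_add, ← exp_half, sinh_eq, mul_comm 2, mul_assoc,
    mul_div_cancel₀ _ two_ne_zero, mul_sub, ← exp_add, ← exp_add]
  ring_nf

lemma add_eq_two_mul_sqrt_mul_cosh {a b : ℝ} (ha : 0 < a) (hb : 0 < b) :
    a + b = 2 * √(a * b) * cosh ((log a - log b) / 2) := by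
  obtain ⟨α, rfl⟩ : ∃ α, a = exp α := ⟨log a, (exp_log ha).symm⟩
  obtain ⟨β, rfl⟩ : ∃ β, b = exp β := ⟨log b, (exp_log hb).symm⟩
  rw [log_exp, log_exp, ← exp_add, ← exp_half, cosh_eq, mul_comm 2, mul_assoc,
    mul_div_cancel₀ _ two_ne_zero, mul_add, ← exp_add, ← exp_add]
  ring_nf

lemma sqrt_mul_div_div_log_sub_log {a b : ℝ} (ha : 0 < a) (hb : 0 < b) (hab : a ≠ b) :
    √(a * b) / ((a - b) / (log a - log b)) =
      (log a - log b) / 2 / sinh ((log a - log b) / 2) := by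
  have hd : (log a - log b) / 2 ≠ 0 :=
    div_ne_zero (sub_ne_zero.2 fun h => hab (log_injOn_pos ha hb h)) two_ne_zero
  have hG : 0 < √(a * b) := by positivity
  rw [sub_eq_two_mul_sqrt_mul_sinh ha hb]
  field_simp [sinh_ne_zero.2 hd]

lemma add_div_two_div_sqrt_mul {a b : ℝ} (ha : 0 < a) (hb : 0 < b) :
    (a + b) / 2 / √(a * b) = cosh ((log a - log b) / 2) := by
  have hG : 0 < √(a * b) := by positivity
  rw [add_eq_two_mul_sqrt_mul_cosh ha hb]
  field_simp

lemma sqrt_mul_div_add_div_two {a b : ℝ} (ha : 0 < a) (hb : 0 < b) :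
    √(a * b) / ((a + b) / 2) = cos (arcsin ((a - b) / (a + b))) := by
  have h : 1 - ((a - b) / (a + b)) ^ 2 = (√(a * b) / ((a + b) / 2)) ^ 2 := by
    rw [div_pow, div_pow, sq_sqrt (by positivity)]
    field_simp
    ring
  rw [cos_arcsin, h, sqrt_sq (by positivity)]

lemma sub_div_arcsin_div_add_div_two {a b : ℝ} (ha : 0 < a) (hb : 0 < b) :
    (a - b) / (2 * arcsin ((a - b) / (a + b))) / ((a + b) / 2) =
      sin (arcsin ((a - b) / (a + b))) / arcsin ((a - b) / (a + b)) := by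
  have hlo : -1 ≤ (a - b) / (a + b) := by rw [le_div_iff₀ (by positivity)]; linarith
  have hhi : (a - b) / (a + b) ≤ 1 := by rw [div_le_one (by positivity)]; linarith
  rw [sin_arcsin hlo hhi]
  field_simp

theorem sandor_thm3b (a b : ℝ) (ha : 0 < a) (hb : 0 < b) (hab : a ≠ b) :
    Real.sqrt (a * b) / ((a - b) / (Real.log a - Real.log b)) <
      (2 / (1 + ((a + b) / 2) / Real.sqrt (a * b))) ^ ((2 : ℝ)/3) ∧
    (2 / (1 + ((a + b) / 2) / Real.sqrt (a * b))) ^ ((2 : ℝ)/3) <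
      ((1 + Real.sqrt (a * b) / ((a + b) / 2)) / 2) ^ ((2 : ℝ)/3) ∧
    ((1 + Real.sqrt (a * b) / ((a + b) / 2)) / 2) ^ ((2 : ℝ)/3) <
      ((a - b) / (2 * arcsin ((a - b) / (a + b)))) / ((a + b) / 2) := by
  have hd : (log a - log b) / 2 ≠ 0 :=
    div_ne_zero (sub_ne_zero.2 fun h => hab (log_injOn_pos ha hb h)) two_ne_zero
  have hθ : arcsin ((a - b) / (a + b)) ≠ 0 := by
    rw [Ne, arcsin_eq_zero_iff]
    exact div_ne_zero (sub_ne_zero.2 hab) (by positivity)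
  have hθ2 : |arcsin ((a - b) / (a + b))| ≤ 2 := abs_le.2
    ⟨by linarith [neg_pi_div_two_le_arcsin ((a - b) / (a + b)), pi_le_four],
      by linarith [arcsin_le_pi_div_two ((a - b) / (a + b)), pi_le_four]⟩
  refine ⟨?_, ?_, ?_⟩
  · rw [sqrt_mul_div_div_log_sub_log ha hb hab, add_div_two_div_sqrt_mul ha hb]
    exact div_sinh_lt_two_div_one_add_cosh_rpow hd
  · rw [← inv_div ((a + b) / 2), add_div_two_div_sqrt_mul ha hb]
    exact rpow_lt_rpow (by positivity)
      (two_div_one_add_lt_one_add_inv_div_two (cosh_pos _) (one_lt_cosh.2 hd).ne') (by norm_num)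
  · rw [sqrt_mul_div_add_div_two ha hb, sub_div_arcsin_div_add_div_two ha hb]
    exact one_add_cos_div_two_rpow_lt_sin_div hθ hθ2
end

section
/- For all a, b > 0 with a ≠ b, A/e < (π/(2e))·P < X < P, where A = (a+b)/2, P = (a-b)/(2·arcsin((a-b)/(a+b))), G = √(ab), and X = A·e^{G/P-1}. -/
/-!
Put `x = arcsin ((a - b) / (a + b))`, so that `0 < |x| < π / 2`. Then `P = A · sinc x` and
`G = A · cos x`, hence `G / P = cos x / sinc x`. The first inequality is Jordan's inequality
`sinc x > 2 / π`. The other two say `log (π / 2) < f x < 1` for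
`f x = cos x / sinc x - log (sinc x)`, an even function with `f' x = 1 / x - x / sin² x < 0` on
`(0, π)`; so on `[0, π / 2]` it decreases from `f 0 = 1` to `f (π / 2) = log (π / 2)`.
-/

open Real Set

noncomputable def cosDivSincSubLogSinc (x : ℝ) : ℝ := cos x / sinc x - log (sinc x)

lemma sinc_abs (x : ℝ) : sinc |x| = sinc x := by
  rcases abs_choice x with h | h <;> simp [h, sinc_neg]

lemma sinc_pos {x : ℝ} (hx : |x| < π) : 0 < sinc x := by
  rcases eq_or_ne x 0 with rfl | hx0
  · simp [sinc_zero]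
  have hx0' : 0 < |x| := abs_pos.2 hx0
  rw [← sinc_abs, sinc_of_ne_zero hx0'.ne']
  exact div_pos (sin_pos_of_pos_of_lt_pi hx0' hx) hx0'

lemma two_div_pi_lt_sinc {x : ℝ} (hx0 : x ≠ 0) (hx : |x| < π / 2) : 2 / π < sinc x := by
  have hx0' : 0 < |x| := abs_pos.2 hx0
  rw [← sinc_abs, sinc_of_ne_zero hx0'.ne', lt_div_iff₀ hx0']
  exact mul_lt_sin hx0' hx

lemma cosDivSincSubLogSinc_abs (x : ℝ) : cosDivSincSubLogSinc |x| = cosDivSincSubLogSinc x := by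
  simp only [cosDivSincSubLogSinc, sinc_abs, cos_abs]

lemma cosDivSincSubLogSinc_zero : cosDivSincSubLogSinc 0 = 1 := by
  simp [cosDivSincSubLogSinc, sinc_zero]

lemma cosDivSincSubLogSinc_pi_div_two : cosDivSincSubLogSinc (π / 2) = log (π / 2) := by
  rw [cosDivSincSubLogSinc, sinc_of_ne_zero pi_div_two_pos.ne', cos_pi_div_two, sin_pi_div_two,
    one_div, log_inv]
  simp

lemma hasDerivAt_cosDivSincSubLogSinc {x : ℝ} (hx : x ≠ 0) (hs : sin x ≠ 0) :
    HasDerivAt cosDivSincSubLogSinc (1 / x - x / sin x ^ 2) x := by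
  have hg : HasDerivAt (fun y => y * cos y / sin y - log (sin y / y))
      (1 / x - x / sin x ^ 2) x := by
    refine ((((hasDerivAt_id x).mul (hasDerivAt_cos x)).div (hasDerivAt_sin x) hs).sub
      (((hasDerivAt_sin x).div (hasDerivAt_id x) hx).log (div_ne_zero hs hx))).congr_deriv ?_
    simp only [id, Pi.mul_apply, Pi.div_apply]
    field_simp
    linear_combination -x ^ 2 * sin_sq_add_cos_sq x
  refine hg.congr_of_eventuallyEq ?_
  filter_upwards [eventually_ne_nhds hx] with y hy
  rw [cosDivSincSubLogSinc, sinc_of_ne_zero hy, div_div_eq_mul_div, mul_comm]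

lemma strictAntiOn_cosDivSincSubLogSinc : StrictAntiOn cosDivSincSubLogSinc (Ico 0 π) := by
  have hsinc : ∀ x ∈ Ico 0 π, sinc x ≠ 0 := fun x hx =>
    (sinc_pos ((abs_of_nonneg hx.1).trans_lt hx.2)).ne'
  have hcont : ContinuousOn cosDivSincSubLogSinc (Ico 0 π) :=
    (continuous_cos.continuousOn.div continuous_sinc.continuousOn hsinc).sub
      (continuous_sinc.continuousOn.log hsinc)
  refine strictAntiOn_of_deriv_neg (convex_Ico 0 π) hcont fun x hx => ?_
  rw [interior_Ico] at hx
  have hs := sin_pos_of_pos_of_lt_pi hx.1 hx.2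
  rw [(hasDerivAt_cosDivSincSubLogSinc hx.1.ne' hs.ne').deriv, sub_neg,
    div_lt_div_iff₀ hx.1 (by positivity)]
  nlinarith [sin_sq_lt_sq hx.1.ne']

lemma cosDivSincSubLogSinc_lt_one {x : ℝ} (hx0 : x ≠ 0) (hx : |x| < π) :
    cosDivSincSubLogSinc x < 1 := by
  rw [← cosDivSincSubLogSinc_abs, ← cosDivSincSubLogSinc_zero]
  exact strictAntiOn_cosDivSincSubLogSinc ⟨le_rfl, pi_pos⟩ ⟨abs_nonneg x, hx⟩ (abs_pos.2 hx0)

lemma log_pi_div_two_lt_cosDivSincSubLogSinc {x : ℝ} (hx : |x| < π / 2) :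
    log (π / 2) < cosDivSincSubLogSinc x := by
  rw [← cosDivSincSubLogSinc_abs, ← cosDivSincSubLogSinc_pi_div_two]
  exact strictAntiOn_cosDivSincSubLogSinc ⟨abs_nonneg x, hx.trans (half_lt_self pi_pos)⟩
    ⟨pi_div_two_pos.le, half_lt_self pi_pos⟩ hx

theorem sandor_chain {A P G x : ℝ} (hA : 0 < A) (hx0 : x ≠ 0) (hx : |x| < π / 2)
    (hP : P = A * sinc x) (hG : G = A * cos x) :
    A / exp 1 < π / (2 * exp 1) * P ∧ π / (2 * exp 1) * P < A * exp (G / P - 1) ∧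
      A * exp (G / P - 1) < P := by
  have hs : 0 < sinc x := sinc_pos (hx.trans (half_lt_self pi_pos))
  have hlow := log_pi_div_two_lt_cosDivSincSubLogSinc hx
  have hup := cosDivSincSubLogSinc_lt_one hx0 (hx.trans (half_lt_self pi_pos))
  rw [cosDivSincSubLogSinc] at hlow hup
  rw [hG, hP, mul_div_mul_left _ _ hA.ne']
  refine ⟨?_, ?_, ?_⟩
  · have hJordan := two_div_pi_lt_sinc hx0 hx
    rw [div_lt_iff₀ (exp_pos 1)]
    calc A = A * (π / 2 * (2 / π)) := by field_simp
      _ < A * (π / 2 * sinc x) := by gcongr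
      _ = π / (2 * exp 1) * (A * sinc x) * exp 1 := by field_simp
  · have hexp : π / 2 * sinc x < exp (cos x / sinc x) := by
      rw [← exp_log (by positivity : 0 < π / 2 * sinc x), log_mul (by positivity) hs.ne',
        exp_lt_exp]
      linarith
    calc π / (2 * exp 1) * (A * sinc x) = A / exp 1 * (π / 2 * sinc x) := by ring
      _ < A / exp 1 * exp (cos x / sinc x) := by gcongr
      _ = A * exp (cos x / sinc x - 1) := by rw [exp_sub]; ring
  · exact mul_lt_mul_of_pos_left
      ((exp_lt_exp.2 (by linarith : _ < log (sinc x))).trans_eq (exp_log hs)) hA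

lemma abs_arcsin_lt_pi_div_two {s : ℝ} (hs : |s| < 1) : |arcsin s| < π / 2 :=
  abs_lt.2 ⟨neg_pi_div_two_lt_arcsin.2 (abs_lt.1 hs).1, arcsin_lt_pi_div_two.2 (abs_lt.1 hs).2⟩

lemma abs_sub_div_add_lt_one {a b : ℝ} (ha : 0 < a) (hb : 0 < b) : |(a - b) / (a + b)| < 1 := by
  rw [abs_div, abs_of_pos (add_pos ha hb), div_lt_one (add_pos ha hb)]
  exact abs_sub_lt_iff.2 ⟨by linarith, by linarith⟩

lemma arcsin_sub_div_add_ne_zero {a b : ℝ} (ha : 0 < a) (hb : 0 < b) (hab : a ≠ b) :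
    arcsin ((a - b) / (a + b)) ≠ 0 := by
  rw [Ne, arcsin_eq_zero_iff, div_eq_zero_iff, sub_eq_zero]
  exact not_or.2 ⟨hab, (add_pos ha hb).ne'⟩

lemma seiffert_eq_mul_sinc {a b : ℝ} (ha : 0 < a) (hb : 0 < b) (hab : a ≠ b) :
    (a - b) / (2 * arcsin ((a - b) / (a + b))) =
      (a + b) / 2 * sinc (arcsin ((a - b) / (a + b))) := by
  obtain ⟨hs₁, hs₂⟩ := abs_lt.1 (abs_sub_div_add_lt_one ha hb)
  rw [sinc_of_ne_zero (arcsin_sub_div_add_ne_zero ha hb hab), sin_arcsin hs₁.le hs₂.le]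
  field_simp

lemma sqrt_mul_eq_mul_cos {a b : ℝ} (ha : 0 < a) (hb : 0 < b) :
    √(a * b) = (a + b) / 2 * cos (arcsin ((a - b) / (a + b))) := by
  have hA : 0 ≤ (a + b) / 2 := by positivity
  rw [cos_arcsin, ← sqrt_sq hA, ← sqrt_mul (sq_nonneg _)]
  congr 1
  field_simp
  ring

theorem sandor_coro89 (a b : ℝ) (ha : 0 < a) (hb : 0 < b) (hab : a ≠ b) :
    ((a + b) / 2) / exp 1 < (π / (2 * exp 1)) * ((a - b) / (2 * arcsin ((a - b) / (a + b)))) ∧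
    (π / (2 * exp 1)) * ((a - b) / (2 * arcsin ((a - b) / (a + b)))) <
      ((a + b) / 2) *
        exp (Real.sqrt (a * b) / ((a - b) / (2 * arcsin ((a - b) / (a + b)))) - 1) ∧
    ((a + b) / 2) *
        exp (Real.sqrt (a * b) / ((a - b) / (2 * arcsin ((a - b) / (a + b)))) - 1) <
      (a - b) / (2 * arcsin ((a - b) / (a + b))) := by
  exact sandor_chain (by positivity) (arcsin_sub_div_add_ne_zero ha hb hab)
    (abs_arcsin_lt_pi_div_two (abs_sub_div_add_lt_one ha hb)) (seiffert_eq_mul_sinc ha hb hab)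
    (sqrt_mul_eq_mul_cos ha hb)
end
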